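/- For n ≥ 3 there is no universal cycle over the alphabet {1,...,n} for the permutations of length n; that is, no word w of length n! over {1,...,n} has the property that every permutation of length n occurs as a cyclic factor of w. -/

import Mathlib

/-!
Suppose every permutation occurs among the `n!` cyclic windows of length `n` of `w`. Since
there are exactly `n!` permutations, every window is a permutation and distinct positions give
distinct windows. Consecutive windows are then permutations of the same letters that share
`n - 1` of them, so the letter leaving equals the letter entering: the cyclic word is
`n`-periodic. Hence the windows at positions `0` and `n` coincide, although `0 ≠ n < n!`.
-/

/-- `w` is a permutation of length `n`: a word on `{1,...,n}` with each letter occurring once. -/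
def IsPermWord (n : Nat) (w : List Nat) : Prop :=
  w.length = n ∧ w.Nodup ∧ ∀ x ∈ w, 1 ≤ x ∧ x ≤ n

open Finset
open scoped List

theorem List.IsInfix.exists_drop_take {α : Type*} {l₁ l₂ : List α} (h : l₁ <:+: l₂) :
    ∃ i, i + l₁.length ≤ l₂.length ∧ (l₂.drop i).take l₁.length = l₁ := by
  obtain ⟨s, t, rfl⟩ := h
  refine ⟨s.length, by simp, ?_⟩
  rw [List.append_assoc, List.drop_left, List.take_left]

theorem List.getElem?_eq_getElem?_add_of_drop_take_perm {α : Type*} {l : List α} {n i : ℕ}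
    (hi : i + n < l.length) (hperm : (l.drop i).take n ~ (l.drop (i + 1)).take n) :
    l[i]? = l[i + n]? := by
  cases n with
  | zero => rfl
  | succ m =>
    have hfront : (l.drop i).take (m + 1) = l[i] :: (l.drop (i + 1)).take m := by
      rw [List.drop_eq_getElem_cons (by omega), List.take_succ_cons]
    have hback :
        (l.drop (i + 1)).take (m + 1) = (l.drop (i + 1)).take m ++ [l[i + (m + 1)]] := by
      rw [List.take_add_one, List.getElem?_drop, show i + 1 + m = i + (m + 1) by omega,
        List.getElem?_eq_getElem hi]
      rfl
    rw [hfront, hback] at hperm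
    have hcons : l[i] = l[i + (m + 1)] := by
      refine (Multiset.cons_inj_left ((l.drop (i + 1)).take m : Multiset α)).1 ?_
      rw [Multiset.cons_coe, Multiset.cons_coe, Multiset.coe_eq_coe]
      exact hperm.trans (List.perm_append_singleton _ _)
    rw [List.getElem?_eq_getElem hi, List.getElem?_eq_getElem (by omega), hcons]

theorem List.take_eq_drop_take_of_getElem?_eq {α : Type*} {l : List α} {n : ℕ}
    (h : ∀ j < n, l[j]? = l[j + n]?) : l.take n = (l.drop n).take n := by
  ext j : 1
  rw [List.getElem?_take, List.getElem?_take, List.getElem?_drop]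
  split_ifs with hj
  · rw [h j hj, Nat.add_comm]
  · rfl

theorem Finset.image_eq_and_injOn_of_subset_image {α β : Type*} [DecidableEq β]
    {s : Finset α} {t : Finset β} {f : α → β} (hsub : t ⊆ s.image f) (hcard : #s ≤ #t) :
    s.image f = t ∧ Set.InjOn f s := by
  have himage : s.image f = t :=
    (Finset.eq_of_subset_of_card_le hsub (hcard.trans' Finset.card_image_le)).symm
  refine ⟨himage, Finset.injOn_of_card_image_eq (le_antisymm Finset.card_image_le ?_)⟩
  rwa [himage]

theorem isPermWord_iff_perm {n : ℕ} {p : List ℕ} : IsPermWord n p ↔ p ~ List.range' 1 n := by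
  constructor
  · rintro ⟨hlen, hnodup, hmem⟩
    refine (List.subperm_of_subset hnodup fun x hx => ?_).perm_of_length_le (by simp [hlen])
    have := hmem x hx
    rw [List.mem_range'_1]
    omega
  · intro hperm
    refine ⟨by simp [hperm.length_eq], hperm.nodup_iff.2 List.nodup_range', fun x hx => ?_⟩
    have := List.mem_range'_1.1 (hperm.mem_iff.1 hx)
    omega

def permWords (n : ℕ) : Finset (List ℕ) := (List.range' 1 n).permutations.toFinset

theorem mem_permWords {n : ℕ} {p : List ℕ} : p ∈ permWords n ↔ IsPermWord n p := by
  rw [permWords, List.mem_toFinset, List.mem_permutations, isPermWord_iff_perm]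

theorem card_permWords (n : ℕ) : #(permWords n) = n.factorial := by
  rw [permWords, List.toFinset_card_of_nodup (List.nodup_permutations _ List.nodup_range'),
    List.length_permutations, List.length_range']

/-- For n ≥ 3 there is no universal cycle over the alphabet {1,...,n} for the
permutations of length n. -/
theorem no_universal_cycle_over_n (n : Nat) (hn : 3 ≤ n) :
    ¬ ∃ w : List Nat, w.length = n.factorial ∧ (∀ x ∈ w, 1 ≤ x ∧ x ≤ n) ∧
      ∀ p : List Nat, IsPermWord n p → p <:+: (w ++ w.take (n - 1)) := by
  rintro ⟨w, hwlen, -, huniv⟩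
  set v := w ++ w.take (n - 1)
  have hn_lt : n < n.factorial := Nat.lt_factorial_self hn
  have hvlen : v.length = n.factorial + (n - 1) := by simp [v, hwlen]; omega
  have hcover : permWords n ⊆ (range n.factorial).image fun i => (v.drop i).take n := by
    intro p hp
    have hlen : p.length = n := (mem_permWords.1 hp).1
    obtain ⟨i, hi, hwindow⟩ := (huniv p (mem_permWords.1 hp)).exists_drop_take
    rw [hlen] at hi hwindow
    exact mem_image.2 ⟨i, mem_range.2 (by omega), hwindow⟩
  obtain ⟨himage, hinj⟩ := image_eq_and_injOn_of_subset_image hcover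
    (by rw [card_range, card_permWords])
  have hperm (i : ℕ) (hi : i < n.factorial) : (v.drop i).take n ~ List.range' 1 n := by
    rw [← isPermWord_iff_perm, ← mem_permWords, ← himage]
    exact mem_image_of_mem _ (mem_range.2 hi)
  have hperiodic (j : ℕ) (hj : j < n) : v[j]? = v[j + n]? :=
    List.getElem?_eq_getElem?_add_of_drop_take_perm (by omega)
      ((hperm j (by omega)).trans (hperm (j + 1) (by omega)).symm)
  have hzero_eq_n : 0 = n := hinj (mem_range.2 (by omega)) (mem_range.2 hn_lt)
    (by simpa using List.take_eq_drop_take_of_getElem?_eq hperiodic)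
  omega
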